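/- Let x_{L+1} = x_L + u with ‖x_L‖ = sqrt(kLd), ‖x_{L+1}‖ = sqrt(k(L+1)d), ‖u‖ ≤ sqrt(kd). Then the normalized vectors satisfy ‖x_{L+1}/‖x_{L+1}‖ − x_L/‖x_L‖‖² = 2 − 2cos θ ≤ 2(1 − sqrt(L/(L+1)) + sqrt(1/(L+1))), which tends to 0 as L → ∞. -/

import Mathlib

/-!
By Cauchy–Schwarz, `‖u‖ ≤ r` gives `⟪x, x + u⟫ ≥ ‖x‖² - r‖x‖`, i.e.
`cos θ ≥ ‖x‖/‖x + u‖ - r/‖x + u‖`, which for the given norms is `√(L/(L+1)) - √(1/(L+1))`.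
-/

open Filter RealInnerProductSpace

section NormalizedDistance

variable {E : Type*} [NormedAddCommGroup E] [InnerProductSpace ℝ E]

theorem norm_inv_norm_smul_sub_sq {a b : E} (ha : a ≠ 0) (hb : b ≠ 0) :
    ‖‖b‖⁻¹ • b - ‖a‖⁻¹ • a‖ ^ 2 = 2 - 2 * (⟪a, b⟫ / (‖a‖ * ‖b‖)) := by
  have ha' : ‖a‖ ≠ 0 := norm_ne_zero_iff.mpr ha
  have hb' : ‖b‖ ≠ 0 := norm_ne_zero_iff.mpr hb
  rw [norm_sub_sq_real, norm_smul, norm_smul, real_inner_smul_left, real_inner_smul_right,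
    real_inner_comm, norm_inv, norm_inv, norm_norm, norm_norm]
  field_simp
  ring

theorem sq_norm_sub_mul_le_inner_add {x u : E} {r : ℝ} (hu : ‖u‖ ≤ r) :
    ‖x‖ ^ 2 - ‖x‖ * r ≤ ⟪x, x + u⟫ := by
  have hxu : -(‖x‖ * ‖u‖) ≤ ⟪x, u⟫ := (abs_le.mp (abs_real_inner_le_norm x u)).1
  rw [inner_add_right, real_inner_self_eq_norm_sq]
  nlinarith [mul_le_mul_of_nonneg_left hu (norm_nonneg x)]

theorem norm_inv_norm_smul_add_sub_sq_le {x u : E} {r : ℝ} (hx : x ≠ 0) (hxu : x + u ≠ 0)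
    (hu : ‖u‖ ≤ r) :
    ‖‖x + u‖⁻¹ • (x + u) - ‖x‖⁻¹ • x‖ ^ 2 ≤ 2 * (1 - ‖x‖ / ‖x + u‖ + r / ‖x + u‖) := by
  have hx' : 0 < ‖x‖ := norm_pos_iff.mpr hx
  have hxu' : 0 < ‖x + u‖ := norm_pos_iff.mpr hxu
  have hcos : ‖x‖ / ‖x + u‖ - r / ‖x + u‖ ≤ ⟪x, x + u⟫ / (‖x‖ * ‖x + u‖) := calc
    ‖x‖ / ‖x + u‖ - r / ‖x + u‖ = (‖x‖ ^ 2 - ‖x‖ * r) / (‖x‖ * ‖x + u‖) := by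
      field_simp
    _ ≤ ⟪x, x + u⟫ / (‖x‖ * ‖x + u‖) := by
      gcongr
      exact sq_norm_sub_mul_le_inner_add hu
  rw [norm_inv_norm_smul_sub_sq hx hxu]
  linarith

end NormalizedDistance

theorem Real.sqrt_mul_div_sqrt_mul {c : ℝ} (hc : 0 < c) (a : ℝ) {b : ℝ} (hb : 0 ≤ b) :
    √(a * c) / √(b * c) = √(a / b) := by
  rw [← Real.sqrt_div' _ (by positivity), mul_div_mul_right _ _ hc.ne']

theorem tendsto_two_mul_one_sub_sqrt_add_sqrt :
    Tendsto (fun n : ℕ => 2 * (1 - √(n / (n + 1)) + √(1 / (n + 1)))) atTop (nhds 0) := by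
  have hratio : Tendsto (fun n : ℕ => √((n : ℝ) / (n + 1))) atTop (nhds 1) := by
    simpa using (tendsto_natCast_div_add_atTop (1 : ℝ)).sqrt
  have hinv : Tendsto (fun n : ℕ => √(1 / ((n : ℝ) + 1))) atTop (nhds 0) := by
    simpa using (tendsto_one_div_add_atTop_nhds_zero_nat (𝕜 := ℝ)).sqrt
  simpa using (((tendsto_const_nhds (x := (1 : ℝ))).sub hratio).add hinv).const_mul (2 : ℝ)

/-- Distance between normalized adjacent residual-stream vectors: it equals `2 − 2cosθ`,
is bounded by `2(1 − sqrt(L/(L+1)) + sqrt(1/(L+1)))`, and this bound tends to `0`. -/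
theorem stmt14 (d : ℕ) (hd : 0 < d) (k : ℝ) (hk : 0 < k) (L : ℕ) (hL : 1 ≤ L)
    (x u : EuclideanSpace ℝ (Fin d))
    (hx : ‖x‖ = Real.sqrt (k * L * d))
    (hxu : ‖x + u‖ = Real.sqrt (k * (L + 1) * d))
    (hu : ‖u‖ ≤ Real.sqrt (k * d)) :
    ‖‖x + u‖⁻¹ • (x + u) - ‖x‖⁻¹ • x‖ ^ 2 =
        2 - 2 * (⟪x, x + u⟫ / (‖x‖ * ‖x + u‖)) ∧
    ‖‖x + u‖⁻¹ • (x + u) - ‖x‖⁻¹ • x‖ ^ 2 ≤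
        2 * (1 - Real.sqrt (L / (L + 1)) + Real.sqrt (1 / (L + 1))) ∧
    Tendsto (fun L : ℕ => 2 * (1 - Real.sqrt (L / (L + 1)) + Real.sqrt (1 / (L + 1))))
      atTop (nhds 0) := by
  have hkd : 0 < k * d := mul_pos hk (by exact_mod_cast hd)
  have hL' : (0 : ℝ) < L := by exact_mod_cast hL
  have hx' : ‖x‖ = √(L * (k * d)) := by rw [hx]; ring_nf
  have hxu' : ‖x + u‖ = √((L + 1) * (k * d)) := by rw [hxu]; ring_nf
  have hx0 : x ≠ 0 := norm_pos_iff.mp (by rw [hx']; positivity)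
  have hxu0 : x + u ≠ 0 := norm_pos_iff.mp (by rw [hxu']; positivity)
  have hratio : ‖x‖ / ‖x + u‖ = √(L / (L + 1)) := by
    rw [hx', hxu', Real.sqrt_mul_div_sqrt_mul hkd _ (by positivity)]
  have hstep : √(k * d) / ‖x + u‖ = √(1 / (L + 1)) := by
    rw [hxu', ← Real.sqrt_mul_div_sqrt_mul hkd _ (by positivity), one_mul]
  refine ⟨norm_inv_norm_smul_sub_sq hx0 hxu0, ?_, tendsto_two_mul_one_sub_sqrt_add_sqrt⟩
  simpa only [hratio, hstep] using norm_inv_norm_smul_add_sub_sq_le hx0 hxu0 hu
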